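/- Let f ∈ ℂ[z₁,…,z_n] be stable, j ∈ {1,…,n}, and α ∈ ℂ with Im(α) ≥ 0. Then the polynomial in the remaining n−1 variables obtained by substituting z_j = α into f is either identically zero or stable. -/

import Mathlib

/-!
A quantitative Hurwitz argument. If `f` is stable, `z` lies in the open upper half-plane `ℍⁿ`
and `‖uᵢ‖ < Im zᵢ` for all `i`, then `s ↦ f (z + s • u)` has no roots in the open unit disc,
and factoring it over its roots gives `‖f (z + u)‖ ≤ 2 ^ deg f * ‖f z‖`. The bound survives
freezing the `j`-th coordinate at any `t` with `Im t > 0`, hence by continuity at `t = α`. So if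
the substituted polynomial vanished at some point of `ℍⁿ`, it would vanish on a whole polydisc
around that point, and therefore identically.
-/

/-- A polynomial `f ∈ ℂ[z₁,…,zₙ]` is stable if it does not vanish whenever all
variables have positive imaginary part. -/
def MvStable {n : ℕ} (f : MvPolynomial (Fin n) ℂ) : Prop :=
  ∀ z : Fin n → ℂ, (∀ j, 0 < (z j).im) → MvPolynomial.eval z f ≠ 0

open scoped Polynomial

theorem Polynomial.norm_eval_le_of_forall_root_norm_ge {K : Type*} [NormedField K]
    [IsAlgClosed K] {p : K[X]} {ρ : ℝ} (hρ : 0 < ρ) (hroots : ∀ r, p.IsRoot r → ρ ≤ ‖r‖)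
    (x : K) : ‖p.eval x‖ ≤ (1 + ‖x‖ / ρ) ^ p.natDegree * ‖p.eval 0‖ := by
  have hnorm (y : K) : ‖p.eval y‖ = ‖p.leadingCoeff‖ * (p.roots.map (‖y - ·‖)).prod := by
    rw [(IsAlgClosed.splits p).eval_eq_prod_roots, norm_mul]
    exact congrArg _
      ((map_multiset_prod (normHom (α := K)) _).trans (by rw [Multiset.map_map]; rfl))
  have hfactor (r : K) (hr : r ∈ p.roots) : ‖x - r‖ ≤ (1 + ‖x‖ / ρ) * ‖0 - r‖ := by
    have hr := hroots r (isRoot_of_mem_roots hr)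
    have : ‖x‖ ≤ ‖x‖ / ρ * ‖r‖ := by
      rw [div_mul_eq_mul_div, le_div_iff₀ hρ]
      gcongr
    rw [zero_sub, norm_neg]
    linarith [norm_sub_le x r]
  calc ‖p.eval x‖
      ≤ ‖p.leadingCoeff‖ * (p.roots.map fun r => (1 + ‖x‖ / ρ) * ‖0 - r‖).prod := by
        rw [hnorm]
        gcongr
        exact Multiset.prod_map_le_prod_map₀ _ _ (fun _ _ => norm_nonneg _) hfactor
    _ = (1 + ‖x‖ / ρ) ^ p.roots.card * ‖p.eval 0‖ := by
        rw [Multiset.prod_map_mul, Multiset.map_const', Multiset.prod_replicate, hnorm]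
        ring
    _ ≤ (1 + ‖x‖ / ρ) ^ p.natDegree * ‖p.eval 0‖ := by
        gcongr
        · exact le_add_of_nonneg_right (by positivity)
        · exact p.card_roots'

namespace MvPolynomial

variable {σ R : Type*} [CommSemiring R]

theorem natDegree_aeval_le_totalDegree (p : MvPolynomial σ R) {q : σ → R[X]}
    (hq : ∀ i, (q i).natDegree ≤ 1) : (aeval q p).natDegree ≤ p.totalDegree := by
  conv_lhs => rw [p.as_sum, map_sum]
  refine Polynomial.natDegree_sum_le_of_forall_le _ _ fun m hm => ?_
  rw [aeval_monomial, Polynomial.algebraMap_eq]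
  refine (Polynomial.natDegree_C_mul_le _ _).trans ?_
  calc (m.prod fun i k => q i ^ k).natDegree
      ≤ ∑ i ∈ m.support, (q i ^ m i).natDegree := Polynomial.natDegree_prod_le _ _
    _ ≤ ∑ i ∈ m.support, m i := Finset.sum_le_sum fun i _ =>
        Polynomial.natDegree_pow_le_of_le _ (hq i) |>.trans_eq (mul_one _)
    _ ≤ p.totalDegree := le_totalDegree hm

noncomputable def restrictLine (f : MvPolynomial σ R) (z u : σ → R) : R[X] :=
  aeval (fun i => Polynomial.C (u i) * Polynomial.X + Polynomial.C (z i)) f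

theorem eval_restrictLine (f : MvPolynomial σ R) (z u : σ → R) (s : R) :
    (f.restrictLine z u).eval s = eval (z + s • u) f := by
  rw [restrictLine, ← Polynomial.coe_aeval_eq_eval, comp_aeval_apply]
  change aeval _ f = aeval _ f
  congr 2 with i
  simp only [Polynomial.coe_aeval_eq_eval, Polynomial.eval_add, Polynomial.eval_mul,
    Polynomial.eval_C, Polynomial.eval_X, Pi.add_apply, Pi.smul_apply, smul_eq_mul]
  ring

theorem natDegree_restrictLine_le (f : MvPolynomial σ R) (z u : σ → R) :
    (f.restrictLine z u).natDegree ≤ f.totalDegree :=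
  natDegree_aeval_le_totalDegree f fun _ => Polynomial.natDegree_linear_le

theorem eval_aeval_ite_C_X [DecidableEq σ] (f : MvPolynomial σ R) (j : σ) (a : R) (v : σ → R) :
    eval v (aeval (fun i => if i = j then C a else X i) f) = eval (Function.update v j a) f := by
  change aeval v (aeval _ f) = aeval _ f
  rw [comp_aeval_apply]
  congr 2 with i
  by_cases hi : i = j <;> simp [hi]

end MvPolynomial

namespace MvStable

open MvPolynomial

variable {n : ℕ} {f : MvPolynomial (Fin n) ℂ}

theorem norm_eval_add_le (hf : MvStable f) {z u : Fin n → ℂ} (hu : ∀ i, ‖u i‖ < (z i).im) :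
    ‖eval (z + u) f‖ ≤ 2 ^ f.totalDegree * ‖eval z f‖ := by
  have hroots (s : ℂ) (hs : (f.restrictLine z u).IsRoot s) : 1 ≤ ‖s‖ := by
    by_contra! hs_lt
    refine hf (z + s • u) (fun i => ?_) (by rwa [← eval_restrictLine])
    have : ‖s * u i‖ < (z i).im := by
      rw [norm_mul]
      exact lt_of_le_of_lt (mul_le_of_le_one_left (norm_nonneg _) hs_lt.le) (hu i)
    simp only [Pi.add_apply, Pi.smul_apply, smul_eq_mul, Complex.add_im]
    linarith [neg_abs_le (s * u i).im, Complex.abs_im_le_norm (s * u i)]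
  calc ‖eval (z + u) f‖ ≤ 2 ^ (f.restrictLine z u).natDegree * ‖eval z f‖ := by
        simpa [eval_restrictLine, one_add_one_eq_two] using
          (f.restrictLine z u).norm_eval_le_of_forall_root_norm_ge one_pos hroots 1
    _ ≤ 2 ^ f.totalDegree * ‖eval z f‖ := by
        gcongr
        · norm_num
        · exact natDegree_restrictLine_le f z u

theorem norm_eval_update_add_le (hf : MvStable f) {z u : Fin n → ℂ}
    (hu : ∀ i, ‖u i‖ < (z i).im) (j : Fin n) {t : ℂ} (ht : 0 ≤ t.im) :
    ‖eval (Function.update (z + u) j t) f‖ ≤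
      2 ^ f.totalDegree * ‖eval (Function.update z j t) f‖ := by
  set S : Set ℂ := {t | ‖eval (Function.update (z + u) j t) f‖ ≤
    2 ^ f.totalDegree * ‖eval (Function.update z j t) f‖}
  have hcont (v : Fin n → ℂ) : Continuous fun t => eval (Function.update v j t) f :=
    (continuous_eval f).comp (continuous_const.update j continuous_id)
  have hclosed : IsClosed S := isClosed_le (hcont _).norm (continuous_const.mul (hcont _).norm)
  have hupper : {t : ℂ | 0 < t.im} ⊆ S := fun t ht => by
    have hsplit : Function.update (z + u) j t = Function.update z j t + Function.update u j 0 := by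
      ext i
      rcases eq_or_ne i j with rfl | hi <;> simp [*]
    change ‖eval (Function.update (z + u) j t) f‖ ≤ _
    rw [hsplit]
    refine hf.norm_eval_add_le fun i => ?_
    rcases eq_or_ne i j with rfl | hi
    · simpa using ht
    · simpa [hi] using hu i
  exact hclosed.closure_subset_iff.2 hupper (by rwa [Complex.closure_setOfPred_lt_im])

end MvStable

theorem stmt7 (n : ℕ) (f : MvPolynomial (Fin n) ℂ) (hf : MvStable f) (j : Fin n)
    (α : ℂ) (hα : 0 ≤ α.im) :
    let g : MvPolynomial (Fin n) ℂ :=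
      MvPolynomial.aeval (fun i => if i = j then MvPolynomial.C α else MvPolynomial.X i) f
    g = 0 ∨ MvStable g := by
  intro g
  have hg (v : Fin n → ℂ) : MvPolynomial.eval v g = MvPolynomial.eval (Function.update v j α) f :=
    MvPolynomial.eval_aeval_ite_C_X f j α v
  refine or_iff_not_imp_left.2 fun hg_ne z hz hgz => ?_
  obtain ⟨w, hw, hgw⟩ : ∃ w ∈ Set.univ.pi fun i => Metric.ball (z i) (z i).im,
      MvPolynomial.eval w g ≠ 0 := by
    by_contra! h
    exact hg_ne (MvPolynomial.funext_set _
      (fun i => infinite_of_mem_nhds (z i) (Metric.ball_mem_nhds _ (hz i))) (by simpa using h))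
  have hbound := hf.norm_eval_update_add_le (u := w - z)
    (fun i => by simpa [dist_eq_norm] using hw i trivial) j hα
  rw [add_sub_cancel, ← hg, ← hg, hgz, norm_zero, mul_zero] at hbound
  exact hgw (norm_le_zero_iff.1 hbound)
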